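/- Let X = {x_1, …, x_k} be a set of variables and Q = {q_1, …, q_s} a set of clauses, each clause being a set of exactly three variables from X (no negations). Construct the graph G' as follows: G' has a vertex q_i for each clause, and the set Q of clause vertices forms an independent set; for each variable x_i, G' has a pair of adjacent vertices x_i and a_i, where a_i is adjacent only to x_i; each clause vertex q_j is adjacent to exactly the variable vertices x_i with x_i ∈ q_j. Then G' is bipartite, and G' has a perfect code if and only if there exists a truth assignment to X setting exactly one variable in each clause of Q to TRUE. -/
import Mathlib


/-- A perfect code in `G` is an independent set `D` such that every vertex is either in
`D` or has exactly one neighbor in `D`. -/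
def IsPerfectCode {V : Type*} (G : SimpleGraph V) (D : Set V) : Prop :=
  D.Pairwise (fun u v => ¬ G.Adj u v) ∧
  ∀ v : V, v ∈ D ∨ ∃! u : V, u ∈ D ∧ G.Adj v u

/-- The bipartite graph built from a One-in-Three 3SAT instance with clauses `Q` over
variables `Fin k`: clause vertices `Sum.inl j` form an independent set, each variable
has a pair of adjacent vertices `Sum.inr (Sum.inl i)` (the variable vertex) and
`Sum.inr (Sum.inr i)` (the pendant vertex `a i`, adjacent only to the variable vertex),
and each clause vertex is adjacent exactly to the variable vertices of its clause. -/
def satGraphBip (k s : ℕ) (Q : Fin s → Finset (Fin k)) :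
    SimpleGraph (Fin s ⊕ (Fin k ⊕ Fin k)) :=
  SimpleGraph.fromRel fun u v =>
    match u, v with
    | Sum.inl j, Sum.inr (Sum.inl i) => i ∈ Q j
    | Sum.inr (Sum.inl i), Sum.inr (Sum.inr i2) => i = i2
    | _, _ => False

/-- The graph `satGraphBip k s Q` built from a One-in-Three 3SAT instance (no negations,
each clause a set of exactly three variables) is bipartite, and it has a perfect code if
and only if some truth assignment sets exactly one variable of each clause to TRUE. -/
theorem satGraphBip_bipartite_perfectCode_iff (k s : ℕ) (Q : Fin s → Finset (Fin k))
    (hQ : ∀ j, (Q j).card = 3) :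
    (satGraphBip k s Q).Colorable 2 ∧
    ((∃ D : Set (Fin s ⊕ Fin k ⊕ Fin k), IsPerfectCode (satGraphBip k s Q) D) ↔
      ∃ T : Set (Fin k), ∀ j : Fin s, ∃! i : Fin k, i ∈ Q j ∧ i ∈ T) := by
  constructor
  · -- bipartite: color variable vertices 1, everything else 0
    refine ⟨SimpleGraph.Coloring.mk
      (fun v => match v with
        | Sum.inl _ => (0 : Fin 2)
        | Sum.inr (Sum.inl _) => 1
        | Sum.inr (Sum.inr _) => 0) ?_⟩
    rintro (j | i | i) (j' | i' | i') h <;> simp_all [satGraphBip]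
  constructor
  · -- perfect code → assignment
    rintro ⟨D, hind, hcover⟩
    -- no clause vertex is in D
    have hclause : ∀ j, Sum.inl j ∉ D := by
      intro j hj
      obtain ⟨i, hi⟩ : (Q j).Nonempty := Finset.card_pos.mp (by rw [hQ j]; norm_num)
      have hx : Sum.inr (Sum.inl i) ∉ D := by
        intro hx
        exact hind hj hx (by simp) (by simp [satGraphBip, hi])
      have ha : Sum.inr (Sum.inr i) ∈ D := by
        rcases hcover (Sum.inr (Sum.inr i)) with h | ⟨u, ⟨hu, hadj⟩, _⟩
        · exact h
        · rcases u with j' | i' | i' <;> simp [satGraphBip] at hadj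
          · subst hadj; exact absurd hu hx
      rcases hcover (Sum.inr (Sum.inl i)) with h | ⟨u, hu, huniq⟩
      · exact hx h
      · have h1 := huniq (Sum.inl j) ⟨hj, by simp [satGraphBip, hi]⟩
        have h2 := huniq (Sum.inr (Sum.inr i)) ⟨ha, by simp [satGraphBip]⟩
        exact absurd (h1.trans h2.symm) (by simp)
    refine ⟨{i | Sum.inr (Sum.inl i) ∈ D}, fun j => ?_⟩
    rcases hcover (Sum.inl j) with h | ⟨u, ⟨hu, hadj⟩, huniq⟩
    · exact absurd h (hclause j)
    · rcases u with j' | i | i <;> simp [satGraphBip] at hadj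
      refine ⟨i, ⟨hadj, hu⟩, ?_⟩
      rintro i' ⟨hi', hD'⟩
      have := huniq (Sum.inr (Sum.inl i')) ⟨hD', by simp [satGraphBip, hi']⟩
      simpa using this
  · -- assignment → perfect code
    rintro ⟨T, hT⟩
    refine ⟨{v | match v with
      | Sum.inl _ => False
      | Sum.inr (Sum.inl i) => i ∈ T
      | Sum.inr (Sum.inr i) => i ∉ T}, ?_, ?_⟩
    · rintro (j | i | i) hu (j' | i' | i') hv hne hadj <;>
        simp_all [satGraphBip, Set.mem_setOf_eq]
    · rintro (j | i | i)
      · -- clause vertex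
        right
        obtain ⟨i, ⟨hiQ, hiT⟩, huniq⟩ := hT j
        refine ⟨Sum.inr (Sum.inl i), ⟨hiT, by simp [satGraphBip, hiQ]⟩, ?_⟩
        rintro (j' | i' | i') ⟨hu, hadj⟩ <;> simp [satGraphBip] at hadj hu
        have := huniq i' ⟨hadj, hu⟩
        simp [this]
      · -- variable vertex
        by_cases hiT : i ∈ T
        · left; exact hiT
        · right
          refine ⟨Sum.inr (Sum.inr i), ⟨hiT, by simp [satGraphBip]⟩, ?_⟩
          rintro (j' | i' | i') ⟨hu, hadj⟩ <;> simp [satGraphBip] at hadj hu <;>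
            simp_all
      · -- pendant vertex
        by_cases hiT : i ∈ T
        · right
          refine ⟨Sum.inr (Sum.inl i), ⟨hiT, by simp [satGraphBip]⟩, ?_⟩
          rintro (j' | i' | i') ⟨hu, hadj⟩ <;> simp [satGraphBip] at hadj hu <;>
            simp_all
        · left; exact hiT
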